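/- arXiv:1410.3572 — 3 statements merged into one kernel-verified Lean document; each statement's English description precedes it below -/
import Mathlib

section
/- Let F be a constant real skew-symmetric n×n matrix, S₋ a constant real symmetric n×n matrix, and b ∈ ℝ. Then S(t) = (t+b)⁻²·exp(log(t+b)·F)·S₋·exp(-log(t+b)·F), defined for t > -b, solves the singular matrix ODE (t+b)·S'(t) + [S(t), F] + 2·S(t) = 0. -/
/-!
Conjugation `C(u) = exp(u F) A exp(-u F)` satisfies `C' = [F, C]`. Substituting `u = log(t + b)`
contributes the factor `(t + b)⁻¹`, and differentiating the prefactor `(t + b)⁻²` contributes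
`-2 (t + b)⁻¹ S`; together these give `(t + b) S' = [F, S] - 2 S`.
-/

open Matrix
open NormedSpace

section ExpConjugation

variable {𝕂 𝔸 : Type*} [RCLike 𝕂] [NormedRing 𝔸] [NormedAlgebra 𝕂 𝔸] [CompleteSpace 𝔸]

theorem hasDerivAt_exp_smul_mul_mul_exp_neg_smul (X A : 𝔸) (u : 𝕂) :
    HasDerivAt (fun v : 𝕂 => exp (v • X) * A * exp (-(v • X)))
      (X * (exp (u • X) * A * exp (-(u • X))) - exp (u • X) * A * exp (-(u • X)) * X) u := by
  have hleft := hasDerivAt_exp_smul_const' X u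
  have hright : HasDerivAt (fun v : 𝕂 => exp (-(v • X))) (-(exp (-(u • X)) * X)) u := by
    simpa [Function.comp_def, neg_smul] using
      (hasDerivAt_exp_smul_const X (-u)).scomp u (hasDerivAt_neg u)
  refine ((hleft.mul_const A).mul hright).congr_deriv ?_
  noncomm_ring

end ExpConjugation

section PlaneWave

variable {𝔸 : Type*} [NormedRing 𝔸] [NormedAlgebra ℝ 𝔸] [CompleteSpace 𝔸]

noncomputable def planeWaveProfile (X A : 𝔸) (b s : ℝ) : 𝔸 :=
  ((s + b) ^ 2)⁻¹ • (exp (Real.log (s + b) • X) * A * exp (-(Real.log (s + b) • X)))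

theorem hasDerivAt_planeWaveProfile (X A : 𝔸) {b t : ℝ} (ht : 0 < t + b) :
    HasDerivAt (planeWaveProfile X A b)
      ((t + b)⁻¹ • (-(planeWaveProfile X A b t * X - X * planeWaveProfile X A b t)
        - (2 : ℝ) • planeWaveProfile X A b t)) t := by
  have hlog : HasDerivAt (fun s : ℝ => Real.log (s + b)) (t + b)⁻¹ t := by
    simpa using ((hasDerivAt_id t).add_const b).log ht.ne'
  have hcoeff : HasDerivAt (fun s : ℝ => ((s + b) ^ 2)⁻¹)
      (-(2 * (t + b)) / ((t + b) ^ 2) ^ 2) t := by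
    simpa [Pi.pow_def, Pi.inv_def] using
      (((hasDerivAt_id t).add_const b).pow 2).inv (pow_ne_zero 2 ht.ne')
  have hconj := (hasDerivAt_exp_smul_mul_mul_exp_neg_smul X A (Real.log (t + b))).scomp t hlog
  refine (hcoeff.smul hconj).congr_deriv ?_
  simp only [planeWaveProfile, Function.comp_def, smul_sub, mul_smul_comm, smul_mul_assoc, smul_neg]
  match_scalars <;> field_simp

end PlaneWave

-- Any normed-algebra structure on matrices will do: they all induce the product topology.
attribute [local instance] Matrix.linftyOpNormedRing Matrix.linftyOpNormedAlgebra

theorem homogeneous_plane_wave_family_two_general {n : ℕ}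
    (F Sm : Matrix (Fin n) (Fin n) ℝ) (b : ℝ)
    (S : ℝ → Matrix (Fin n) (Fin n) ℝ)
    (hSdef : ∀ t, t > -b → S t =
      ((t + b) ^ 2)⁻¹ •
        (NormedSpace.exp (Real.log (t + b) • F) * Sm *
          NormedSpace.exp (-(Real.log (t + b) • F)))) :
    ∀ t, t > -b →
      ∀ i j, HasDerivAt (fun s => S s i j)
        (((t + b)⁻¹ • (-(S t * F - F * S t) - (2 : ℝ) • S t)) i j) t := by
  intro t ht i j
  have hS : S =ᶠ[nhds t] planeWaveProfile F Sm b :=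
    Filter.eventually_of_mem (lt_mem_nhds ht) hSdef
  rw [hS.eq_of_nhds]
  have hderiv := (hasDerivAt_planeWaveProfile F Sm (b := b) (by linarith)).congr_of_eventuallyEq hS
  exact (entryLinearMap ℝ ℝ i j).toContinuousLinearMap.hasFDerivAt.comp_hasDerivAt t hderiv

/-- For a constant skew-symmetric `F`, symmetric `Sm` and `b ∈ ℝ`, the family
`S(t) = (t+b)⁻² · exp(log(t+b)·F) · Sm · exp(-log(t+b)·F)`, defined for
`t > -b`, solves the singular ODE `(t+b)·S' + [S,F] + 2S = 0`. -/
theorem homogeneous_plane_wave_family_two {n : ℕ}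
    (F Sm : Matrix (Fin n) (Fin n) ℝ) (b : ℝ)
    (hF : Fᵀ = -F) (hS : Smᵀ = Sm)
    (S : ℝ → Matrix (Fin n) (Fin n) ℝ)
    (hSdef : ∀ t, t > -b → S t =
      ((t + b) ^ 2)⁻¹ •
        (NormedSpace.exp (Real.log (t + b) • F) * Sm *
          NormedSpace.exp (-(Real.log (t + b) • F)))) :
    ∀ t, t > -b →
      ∀ i j, HasDerivAt (fun s => S s i j)
        (((t + b)⁻¹ • (-(S t * F - F * S t) - (2 : ℝ) • S t)) i j) t :=
  homogeneous_plane_wave_family_two_general F Sm b S hSdef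
end

section
/- Let h ⊂ so(n) be a Lie subalgebra and φ : h → ℝ^{n-q} a linear map (1 < q < n, h ⊂ so(q) acting on the first q coordinates). Define g ⊂ sim(n) to be the set of matrices of the form [[0, Xᵀ, φ(F)ᵀ, 0],[0, F, 0, -X],[0, 0, 0, -φ(F)],[0,0,0,0]] with F ∈ h, X ∈ ℝ^q. If φ is a Lie algebra homomorphism to the abelian ℝ^{n-q} vanishing on [h,h] (i.e. φ([F₁,F₂]) = 0 for all F₁,F₂ ∈ h), then g is a Lie subalgebra of so(1,n+1). -/
open Matrix

/-- Index set for `ℝ^{1,n+1}` with coordinates split as `(x⁻, ℝ^q, ℝ^{n-q}, x⁺)`,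
where `r = n - q`. -/
abbrev BIdx (q r : ℕ) := Fin 1 ⊕ (Fin q ⊕ (Fin r ⊕ Fin 1))

/-- The matrix `[[0, Xᵀ, zᵀ, 0],[0, F, 0, -X],[0, 0, 0, -z],[0,0,0,0]]`
(with `z = φ(F)`). -/
def bbiMat {q r : ℕ} (F : Matrix (Fin q) (Fin q) ℝ) (X : Fin q → ℝ)
    (z : Fin r → ℝ) : Matrix (BIdx q r) (BIdx q r) ℝ :=
  Matrix.of fun i j =>
    match i, j with
    | .inl _, .inr (.inl k) => X k
    | .inl _, .inr (.inr (.inl m)) => z m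
    | .inr (.inl k), .inr (.inl l) => F k l
    | .inr (.inl k), .inr (.inr (.inr _)) => -X k
    | .inr (.inr (.inl m)), .inr (.inr (.inr _)) => -z m
    | _, _ => 0

/-- The Lorentzian form on `ℝ^{1,n+1}` in the null basis `(x⁻, ℝ^q, ℝ^{n-q}, x⁺)`:
the first and last coordinates pair to `1`, the middle block is Euclidean. -/
def lorentzForm (q r : ℕ) : Matrix (BIdx q r) (BIdx q r) ℝ :=
  Matrix.of fun i j =>
    match i, j with
    | .inl _, .inr (.inr (.inr _)) => 1
    | .inr (.inr (.inr _)), .inl _ => 1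
    | .inr (.inl k), .inr (.inl l) => if k = l then 1 else 0
    | .inr (.inr (.inl m)), .inr (.inr (.inl m')) => if m = m' then 1 else 0
    | _, _ => 0

lemma bbiMat_add {q r : ℕ} (F₁ F₂ : Matrix (Fin q) (Fin q) ℝ) (X₁ X₂ : Fin q → ℝ)
    (z₁ z₂ : Fin r → ℝ) :
    bbiMat F₁ X₁ z₁ + bbiMat F₂ X₂ z₂ = bbiMat (F₁ + F₂) (X₁ + X₂) (z₁ + z₂) := by
  ext i j
  rcases i with i | k | m | i <;> rcases j with j | l | m' | j <;>
    simp [bbiMat, Matrix.add_apply] <;> ring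

lemma bbiMat_smul {q r : ℕ} (c : ℝ) (F : Matrix (Fin q) (Fin q) ℝ) (X : Fin q → ℝ)
    (z : Fin r → ℝ) :
    c • bbiMat F X z = bbiMat (c • F) (c • X) (c • z) := by
  ext i j
  rcases i with i | k | m | i <;> rcases j with j | l | m' | j <;>
    simp [bbiMat, Matrix.smul_apply]

lemma bbiMat_skew {q r : ℕ} (F : Matrix (Fin q) (Fin q) ℝ) (X : Fin q → ℝ)
    (z : Fin r → ℝ) (hF : Fᵀ = -F) :
    (bbiMat F X z)ᵀ * lorentzForm q r + lorentzForm q r * bbiMat F X z = 0 := by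
  have hF' : ∀ k l, F l k = -F k l := fun k l => by
    have := congrFun (congrFun hF k) l
    simpa using this
  ext i j
  rcases i with i | k | m | i <;> rcases j with j | l | m' | j <;>
    simp [bbiMat, lorentzForm, Matrix.mul_apply, Matrix.add_apply,
      Fintype.sum_sum_type, Finset.sum_ite_eq, Finset.sum_ite_eq',
      Matrix.transpose_apply]
  · rw [hF' l k]; ring

lemma bbiMat_bracket {q r : ℕ} (F₁ F₂ : Matrix (Fin q) (Fin q) ℝ) (X₁ X₂ : Fin q → ℝ)
    (z₁ z₂ : Fin r → ℝ) (h₁ : F₁ᵀ = -F₁) (h₂ : F₂ᵀ = -F₂) :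
    bbiMat F₁ X₁ z₁ * bbiMat F₂ X₂ z₂ - bbiMat F₂ X₂ z₂ * bbiMat F₁ X₁ z₁ =
      bbiMat (F₁ * F₂ - F₂ * F₁) (F₁.mulVec X₂ - F₂.mulVec X₁) 0 := by
  have h₁' : ∀ k l, F₁ l k = -F₁ k l := fun k l => by
    have := congrFun (congrFun h₁ k) l
    simpa using this
  have h₂' : ∀ k l, F₂ l k = -F₂ k l := fun k l => by
    have := congrFun (congrFun h₂ k) l
    simpa using this
  ext i j
  rcases i with i | k | m | i <;> rcases j with j | l | m' | j <;>
    simp only [bbiMat, Matrix.mul_apply, Matrix.sub_apply, Matrix.of_apply,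
      Fintype.sum_sum_type, Fin.sum_univ_one, Matrix.mulVec, dotProduct,
      Pi.sub_apply, Pi.zero_apply, mul_zero, zero_mul, neg_zero, add_zero,
      zero_add, Finset.sum_const_zero, sub_zero, zero_sub, neg_neg, sub_self,
      mul_neg, neg_mul, Finset.sum_neg_distrib] <;>
  try rfl
  all_goals try ring
  · have e₁ : ∑ x, X₁ x * F₂ x l = ∑ x, -(F₂ l x * X₁ x) :=
      Finset.sum_congr rfl fun x _ => by rw [h₂' l x]; ring
    have e₂ : ∑ x, X₂ x * F₁ x l = ∑ x, -(F₁ l x * X₂ x) :=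
      Finset.sum_congr rfl fun x _ => by rw [h₁' l x]; ring
    rw [e₁, e₂, Finset.sum_neg_distrib, Finset.sum_neg_distrib]; ring
  · have c₁ : ∑ x, X₂ x * X₁ x = ∑ x, X₁ x * X₂ x :=
      Finset.sum_congr rfl fun x _ => mul_comm _ _
    have c₂ : ∑ x, z₂ x * z₁ x = ∑ x, z₁ x * z₂ x :=
      Finset.sum_congr rfl fun x _ => mul_comm _ _
    rw [c₁, c₂]; ring

/-- Bérard-Bergery–Ikemakhen subalgebras: if `h ⊂ so(q)` is a Lie subalgebra and
`φ : h → ℝ^{n-q}` is a linear map vanishing on `[h,h]`, then the set `g` of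
matrices `[[0, Xᵀ, φ(F)ᵀ, 0],[0, F, 0, -X],[0, 0, 0, -φ(F)],[0,0,0,0]]`,
`F ∈ h`, `X ∈ ℝ^q`, is a Lie subalgebra of `so(1,n+1)`. -/
theorem bbi_subalgebra {q r : ℕ} (hq : 1 < q) (hr : 0 < r)
    (h : Set (Matrix (Fin q) (Fin q) ℝ))
    (hskew : ∀ F ∈ h, Fᵀ = -F)
    (hadd : ∀ F₁ ∈ h, ∀ F₂ ∈ h, F₁ + F₂ ∈ h)
    (hsmul : ∀ (c : ℝ), ∀ F ∈ h, c • F ∈ h)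
    (hbrack : ∀ F₁ ∈ h, ∀ F₂ ∈ h, F₁ * F₂ - F₂ * F₁ ∈ h)
    (φ : Matrix (Fin q) (Fin q) ℝ →ₗ[ℝ] (Fin r → ℝ))
    (hφ : ∀ F₁ ∈ h, ∀ F₂ ∈ h, φ (F₁ * F₂ - F₂ * F₁) = 0) :
    ∀ B₁ ∈ {B | ∃ F ∈ h, ∃ X, B = bbiMat F X (φ F)},
    ∀ B₂ ∈ {B | ∃ F ∈ h, ∃ X, B = bbiMat F X (φ F)},
      (B₁ᵀ * lorentzForm q r + lorentzForm q r * B₁ = 0) ∧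
      (B₁ + B₂ ∈ {B | ∃ F ∈ h, ∃ X, B = bbiMat F X (φ F)}) ∧
      (∀ c : ℝ, c • B₁ ∈ {B | ∃ F ∈ h, ∃ X, B = bbiMat F X (φ F)}) ∧
      (B₁ * B₂ - B₂ * B₁ ∈ {B | ∃ F ∈ h, ∃ X, B = bbiMat F X (φ F)}) := by
  rintro B₁ ⟨F₁, hF₁, X₁, rfl⟩ B₂ ⟨F₂, hF₂, X₂, rfl⟩
  refine ⟨bbiMat_skew F₁ X₁ (φ F₁) (hskew F₁ hF₁), ?_, ?_, ?_⟩
  · exact ⟨F₁ + F₂, hadd F₁ hF₁ F₂ hF₂, X₁ + X₂, by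
      rw [bbiMat_add, map_add]⟩
  · intro c
    exact ⟨c • F₁, hsmul c F₁ hF₁, c • X₁, by
      rw [bbiMat_smul, _root_.map_smul]⟩
  · refine ⟨F₁ * F₂ - F₂ * F₁, hbrack F₁ hF₁ F₂ hF₂,
      F₁.mulVec X₂ - F₂.mulVec X₁, ?_⟩
    rw [hφ F₁ hF₁ F₂ hF₂,
      bbiMat_bracket F₁ F₂ X₁ X₂ (φ F₁) (φ F₂) (hskew F₁ hF₁) (hskew F₂ hF₂)]
end

section
/- Consider on ℝ³ with coordinates (x⁻, x, x⁺) the Lorentzian metric g = 2 dx⁺(dx⁻ + e^{2ax} dx⁺) + dx², where a ≠ 0 is a real constant. Then the vector field K = a x⁺ ∂₊ - a x⁻ ∂₋ - ∂ₓ is a Killing vector field of g, i.e. the Lie derivative L_K g = 0. -/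
open Real

/-- The metric components of `g = 2 dx⁺(dx⁻ + e^{2ax} dx⁺) + dx²` on `ℝ³` with
coordinates `(x⁻, x, x⁺)` indexed by `0, 1, 2`. -/
noncomputable def ppMetric3 (a : ℝ) (p : Fin 3 → ℝ) : Matrix (Fin 3) (Fin 3) ℝ :=
  !![0, 0, 1; 0, 1, 0; 1, 0, 2 * exp (2 * a * p 1)]

/-- The vector field `K = a x⁺ ∂₊ - a x⁻ ∂₋ - ∂ₓ` on `ℝ³`. -/
def ppKilling3 (a : ℝ) (p : Fin 3 → ℝ) : Fin 3 → ℝ :=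
  ![-(a * p 0), -1, a * p 2]

/-!
The only non-constant component is `g₊₊ = 2e^{2ax}`, and `K` is affine with Jacobian
`diag(-a, 0, a)`. The boost part `a x⁺ ∂₊ - a x⁻ ∂₋` preserves `2 dx⁺ dx⁻` and rescales `g₊₊`
by `2a`, which is exactly cancelled by the translation `-∂ₓ`, since `∂ₓ g₊₊ = 2a g₊₊`.
-/

section

variable {ι : Type*} [Fintype ι]

theorem fderiv_const_mul_apply (c : ℝ) (k : ι) (p v : ι → ℝ) :
    fderiv ℝ (fun q : ι → ℝ => c * q k) p v = c * v k := by
  rw [((hasFDerivAt_apply k p).const_mul c).fderiv]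
  simp

theorem fderiv_const_mul_exp_mul_apply (b c : ℝ) (k : ι) (p v : ι → ℝ) :
    fderiv ℝ (fun q : ι → ℝ => b * exp (c * q k)) p v = b * c * exp (c * p k) * v k := by
  rw [((((hasFDerivAt_apply k p).const_mul c).exp).const_mul b).fderiv]
  simp
  ring

end

theorem fderiv_ppKilling3_apply (a : ℝ) (p v : Fin 3 → ℝ) (k : Fin 3) :
    fderiv ℝ (fun q => ppKilling3 a q k) p v = ![-(a * v 0), 0, a * v 2] k := by
  fin_cases k <;> simp [ppKilling3, fderiv_const_mul_apply]

theorem fderiv_ppMetric3_apply (a : ℝ) (p v : Fin 3 → ℝ) (i j : Fin 3) :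
    fderiv ℝ (fun q => ppMetric3 a q i j) p v =
      !![0, 0, 0; 0, 0, 0; 0, 0, 4 * a * exp (2 * a * p 1) * v 1] i j := by
  fin_cases i <;> fin_cases j <;> norm_num [ppMetric3, fderiv_const_mul_exp_mul_apply, ← mul_assoc]

theorem ppwave3_killing_general (a : ℝ) (p : Fin 3 → ℝ) (i j : Fin 3) :
    (∑ k, (ppKilling3 a p k *
          fderiv ℝ (fun q => ppMetric3 a q i j) p (Pi.single k 1)
        + ppMetric3 a p k j * fderiv ℝ (fun q => ppKilling3 a q k) p (Pi.single i 1)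
        + ppMetric3 a p i k * fderiv ℝ (fun q => ppKilling3 a q k) p (Pi.single j 1)))
      = 0 := by
  simp only [fderiv_ppMetric3_apply, fderiv_ppKilling3_apply, Fin.sum_univ_three]
  fin_cases i <;> fin_cases j <;> simp [ppMetric3, ppKilling3]
  ring

/-- On `ℝ³` with the pp-wave metric `g = 2 dx⁺(dx⁻ + e^{2ax} dx⁺) + dx²`,
`a ≠ 0`, the vector field `K = a x⁺ ∂₊ - a x⁻ ∂₋ - ∂ₓ` is a Killing vector
field: in coordinates,
`(L_K g)_{ij} = Kᵏ ∂ₖ g_{ij} + g_{kj} ∂ᵢ Kᵏ + g_{ik} ∂ⱼ Kᵏ = 0`. -/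
theorem ppwave3_killing (a : ℝ) (ha : a ≠ 0) (p : Fin 3 → ℝ) (i j : Fin 3) :
    (∑ k, (ppKilling3 a p k *
          fderiv ℝ (fun q => ppMetric3 a q i j) p (Pi.single k 1)
        + ppMetric3 a p k j * fderiv ℝ (fun q => ppKilling3 a q k) p (Pi.single i 1)
        + ppMetric3 a p i k * fderiv ℝ (fun q => ppKilling3 a q k) p (Pi.single j 1)))
      = 0 :=
  ppwave3_killing_general a p i j
end
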